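/- The Weyl operators satisfy the composition law U(h₁,h₂) U(k₁,k₂) = exp(i(⟨h̄₂,k₁⟩ − ⟨h̄₁,k₂⟩)) U(h₁+k₁, h₂+k₂), where the Weyl operator acts on exponential vectors by U(h₁,h₂)ℰ(f) = exp(−⟨f̄, h₁+ih₂⟩ − (⟨h̄₁,h₁⟩+⟨h̄₂,h₂⟩)/2) ℰ(f+h₁+ih₂). -/
import Mathlib


open scoped ComplexInnerProductSpace

/-- The scalar factor in the action of the Weyl operator `U(h₁,h₂)` on the
exponential vector `ℰ(f)`:
`U(h₁,h₂)ℰ(f) = exp(−⟨f̄, h₁+ih₂⟩ − (⟨h̄₁,h₁⟩+⟨h̄₂,h₂⟩)/2) ℰ(f+h₁+ih₂)`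
(here `c` is the conjugation of `𝔥_ℂ`; for the first term
`⟨f̄, h₁+ih₂⟩ = ⟪h₁+ih₂, f⟫` in the Mathlib convention, where the inner product
is conjugate-linear in the first variable). -/
noncomputable def weylScalar {H : Type*} [NormedAddCommGroup H] [InnerProductSpace ℂ H]
    (c : H → H) (h₁ h₂ f : H) : ℂ :=
  Complex.exp (-⟪h₁ + Complex.I • h₂, f⟫ - (⟪c h₁, h₁⟫ + ⟪c h₂, h₂⟫) / 2)

/-- The action of the Weyl operator `U(h₁,h₂)` on the exponential vector `ℰ(f)`. -/
noncomputable def weylAct {H F : Type*} [NormedAddCommGroup H] [InnerProductSpace ℂ H]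
    [AddCommGroup F] [Module ℂ F] (E : H → F) (c : H → H) (h₁ h₂ f : H) : F :=
  weylScalar c h₁ h₂ f • E (f + h₁ + Complex.I • h₂)

/-- **Composition law of Weyl operators.**
`U(h₁,h₂) U(k₁,k₂) = exp(i(⟨h̄₂,k₁⟩ − ⟨h̄₁,k₂⟩)) U(h₁+k₁, h₂+k₂)`,
as operators on the span of exponential vectors (here evaluated on an arbitrary
exponential vector `ℰ(f)`; the left-hand side is `U(h₁,h₂)` applied to
`U(k₁,k₂)ℰ(f) = weylScalar c k₁ k₂ f • ℰ(f+k₁+ik₂)`), where `(h₁,h₂)` is a pair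
of real vectors (`c h₁ = h₁`, `c h₂ = h₂`). -/
theorem weyl_composition
    {H F : Type*} [NormedAddCommGroup H] [InnerProductSpace ℂ H]
    [AddCommGroup F] [Module ℂ F]
    (E : H → F) (c : H → H)
    (hc_add : ∀ x y : H, c (x + y) = c x + c y)
    (hc_smul : ∀ (z : ℂ) (x : H), c (z • x) = (starRingEnd ℂ z) • c x)
    (hc_invol : ∀ x : H, c (c x) = x)
    (hc_inner : ∀ x y : H, ⟪c x, c y⟫ = ⟪y, x⟫)
    (h₁ h₂ : H) (hh₁ : c h₁ = h₁) (hh₂ : c h₂ = h₂) (k₁ k₂ f : H) :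
    weylScalar c k₁ k₂ f • weylAct E c h₁ h₂ (f + k₁ + Complex.I • k₂)
      = Complex.exp (Complex.I * (⟪c h₂, k₁⟫ - ⟪c h₁, k₂⟫)) •
          weylAct E c (h₁ + k₁) (h₂ + k₂) f := by
  have hk1 : ⟪c k₁, h₁⟫ = ⟪h₁, k₁⟫ := by
    conv_lhs => rw [← hh₁, hc_inner]
  have hk2 : ⟪c k₂, h₂⟫ = ⟪h₂, k₂⟫ := by
    conv_lhs => rw [← hh₂, hc_inner]
  have harg : f + k₁ + Complex.I • k₂ + h₁ + Complex.I • h₂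
      = f + (h₁ + k₁) + Complex.I • (h₂ + k₂) := by
    rw [smul_add]; abel
  unfold weylAct
  rw [harg, smul_smul, smul_smul]
  congr 1
  unfold weylScalar
  rw [← Complex.exp_add, ← Complex.exp_add]
  congr 1
  simp only [hc_add, hc_smul, hh₁, hh₂, inner_add_left, inner_add_right,
    inner_smul_left, inner_smul_right, hk1, hk2, Complex.conj_I]
  linear_combination Complex.I_sq * (⟪h₂, k₂⟫ : ℂ)
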